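/- In any greedy run on a 2NC-TAP instance, the dual objective value of y equals the total cost of the picked links: for each non-leaf node u of T, Σ_{𝒫 ∈ Ptn⊇(comps(T−u))} (|𝒫| − 1)·y(𝒫) = Σ_{j=1}^{ν(u)−1} wgt(𝒫̂^j_u), and summing over all non-leaf nodes, Σ_{u non-leaf} Σ_{𝒫 ∈ Ptn⊇(comps(T−u))} (|𝒫| − 1)·y(𝒫) = Σ_{i=1}^{m} cost(ℓ_i). -/

import Mathlib

/-!
A picked link merges two blocks of `𝒫_u` when it crosses `𝒫_u` and leaves `𝒫_u` unchanged
otherwise, so when the `j`-th weight of `u` is assigned (counting from `0`) the current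
partition has `ν(u) - j` blocks. Hence `Σ_j (|𝒫̂^j_u| - 1) y(𝒫̂^j_u)` is
`Σ_j (ν(u) - 1 - j) (wgt_j - wgt_{j-1})` (with `wgt_{-1} = 0`), which telescopes to `Σ_j wgt_j`. Summing over `u` and
exchanging the sums, the link `ℓ_i` contributes its ratio `cost(ℓ_i) / |inc^i(ℓ_i)|` once for
every `u ∈ inc^i(ℓ_i)`, that is `cost(ℓ_i)` in total.
-/

open scoped Classical
open Finset

namespace TwoNCTAP

variable {V : Type*}

/-- The graph `H` with the vertex `u` "deleted": all edges incident to `u` are removed,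
so that `u` becomes an isolated vertex. -/
def delVert (H : SimpleGraph V) (u : V) : SimpleGraph V where
  Adj a b := H.Adj a b ∧ a ≠ u ∧ b ≠ u
  symm := ⟨by rintro a b ⟨h, ha, hb⟩; exact ⟨h.symm, hb, ha⟩⟩
  loopless := ⟨by rintro a ⟨h, -, -⟩; exact H.irrefl h⟩

/-- The partition of `V ∖ {u}` into the vertex sets of the connected components of `H − u`. -/
def compPartition (H : SimpleGraph V) (u : V) : Set (Set V) :=
  {S | ∃ v, v ≠ u ∧ S = {w | (delVert H u).Reachable v w}}

/-- `P` is a partition of the set `S`. -/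
def IsPartitionOf (P : Set (Set V)) (S : Set V) : Prop :=
  (∀ B ∈ P, B.Nonempty) ∧ (∀ B ∈ P, B ⊆ S) ∧ ∀ v ∈ S, ∃! B : Set V, B ∈ P ∧ v ∈ B

/-- `P ∈ Ptn⊇(comps(T−u))`: `P` is a partition of `V ∖ {u}` each of whose blocks is a
union of vertex sets of connected components of `T − u`. -/
def PtnSup (T : SimpleGraph V) (u : V) (P : Set (Set V)) : Prop :=
  IsPartitionOf P {v | v ≠ u} ∧ ∀ B ∈ compPartition T u, ∃ C ∈ P, B ⊆ C

/-- An edge `e` crosses the partition `P` if its two endpoints lie in different blocks of `P`. -/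
def Crosses (P : Set (Set V)) (e : Sym2 V) : Prop :=
  ∃ v w, e = s(v, w) ∧ ∃ B ∈ P, ∃ C ∈ P, B ≠ C ∧ v ∈ B ∧ w ∈ C

/-- `u` is a non-leaf node of `T`. -/
def NonLeaf (T : SimpleGraph V) (u : V) : Prop := 1 < (T.neighborSet u).ncard

/-- The links of the instance: the edges of `G` that are not edges of the tree `T`. -/
def links (G T : SimpleGraph V) : Set (Sym2 V) := G.edgeSet \ T.edgeSet

variable [Fintype V]

/-- Feasibility for the partition LP (P) of the 2NC-TAP instance `(G, T, cost)`. -/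
def FeasibleP (G T : SimpleGraph V) (x : Sym2 V → ℝ) : Prop :=
  (∀ ℓ ∈ links G T, 0 ≤ x ℓ) ∧
  ∀ u : V, NonLeaf T u → ∀ P : Set (Set V), PtnSup T u P →
    (P.ncard : ℝ) - 1 ≤
      ∑ ℓ ∈ Finset.univ.filter (fun ℓ : Sym2 V => ℓ ∈ links G T ∧ Crosses P ℓ), x ℓ


/-- The tree `T` together with a set `F` of links added as edges. -/
def withLinks (T : SimpleGraph V) (F : Set (Sym2 V)) : SimpleGraph V :=
  T ⊔ SimpleGraph.fromEdgeSet F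

/-- The current partition `𝒫^i_u` (0-indexed): the partition of `V ∖ {u}` into the vertex
sets of the connected components of `(T ∪ {ℓ_0, …, ℓ_{i−1}}) − u`. -/
def curPtn {m : ℕ} (T : SimpleGraph V) (ℓseq : Fin m → Sym2 V) (i : ℕ) (u : V) :
    Set (Set V) :=
  compPartition (withLinks T {e | ∃ j : Fin m, (j : ℕ) < i ∧ ℓseq j = e}) u

/-- `inc^i(e)`: the set of non-leaf nodes `u` of `T` whose current partition (at the start
of iteration `i`, 0-indexed) is crossed by the link `e`. -/
def incSet {m : ℕ} (T : SimpleGraph V) (ℓseq : Fin m → Sym2 V) (i : ℕ)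
    (e : Sym2 V) : Set V :=
  {u | NonLeaf T u ∧ Crosses (curPtn T ℓseq i u) e}

/-- A greedy run on the 2NC-TAP instance `(G, T, cost)`: a sequence of distinct links
`ℓ_0, …, ℓ_{m−1}` such that each `ℓ_i` minimizes the cost-coverage ratio at iteration `i`,
and at the end every current partition is trivial (i.e. `T` plus the picked links
is 2-node-connected). -/
def IsGreedyRun (G T : SimpleGraph V) (cost : Sym2 V → ℝ) (m : ℕ)
    (ℓseq : Fin m → Sym2 V) : Prop :=
  Function.Injective ℓseq ∧
  (∀ i, ℓseq i ∈ links G T) ∧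
  (∀ i : Fin m,
    (incSet T ℓseq (i : ℕ) (ℓseq i)).Nonempty ∧
    ∀ e ∈ links G T, (incSet T ℓseq (i : ℕ) e).Nonempty →
      cost (ℓseq i) / ((incSet T ℓseq (i : ℕ) (ℓseq i)).ncard : ℝ)
        ≤ cost e / ((incSet T ℓseq (i : ℕ) e).ncard : ℝ)) ∧
  ∀ u : V, NonLeaf T u → curPtn T ℓseq m u = {{v | v ≠ u}}

/-- `ν(u)`: the number of connected components of `T − u`. -/
noncomputable def nblocks (T : SimpleGraph V) (u : V) : ℕ := (compPartition T u).ncard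


/-- The dual values associated with a sequence `w` of assigned weights:
`yOf w 0 = w 0` and `yOf w j = w j − w (j−1)` for `j ≥ 1`. -/
def yOf {k : ℕ} (w : Fin k → ℝ) (j : Fin k) : ℝ :=
  if (j : ℕ) = 0 then w j
  else w j - w ⟨(j : ℕ) - 1, lt_of_le_of_lt (Nat.sub_le _ _) j.isLt⟩


end TwoNCTAP

theorem Set.ncard_image_add_one_of_injOn_sdiff_singleton {α β : Type*} {f : α → β} {s : Set α}
    {a b : α} (ha : a ∈ s) (hb : b ∈ s) (hab : a ≠ b) (hfab : f a = f b)
    (hinj : Set.InjOn f (s \ {b})) (hs : s.Finite := by toFinite_tac) :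
    (f '' s).ncard + 1 = s.ncard := by
  have himage : f '' s = f '' (s \ {b}) := by
    refine (Set.image_mono Set.sdiff_subset).antisymm' ?_
    rintro _ ⟨x, hx, rfl⟩
    by_cases hxb : x = b
    · exact ⟨a, ⟨ha, hab⟩, hxb ▸ hfab⟩
    · exact ⟨x, ⟨hx, hxb⟩, rfl⟩
  rw [himage, hinj.ncard_image, Set.ncard_sdiff_singleton_add_one hb hs]

theorem Fin.card_filter_val_lt_succ_and {m : ℕ} (p : Fin m → Prop) (i : Fin m) :
    #{j : Fin m | (j : ℕ) < i + 1 ∧ p j} =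
      #{j : Fin m | (j : ℕ) < i ∧ p j} + if p i then 1 else 0 := by
  split_ifs with hp
  · rw [← card_insert_of_notMem (a := i) (by simp)]
    congr 1
    ext j
    simp only [mem_filter, mem_insert, mem_univ, true_and, Nat.lt_succ_iff_lt_or_eq, ← Fin.ext_iff]
    grind
  · rw [add_zero]
    congr 1
    ext j
    simp only [mem_filter, mem_univ, true_and, Nat.lt_succ_iff_lt_or_eq, ← Fin.ext_iff]
    grind

namespace SimpleGraph

variable {V : Type*} {G : SimpleGraph V} {a b x y : V}

theorem Reachable.of_sup_edge (h : (G ⊔ edge a b).Reachable x y) :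
    G.Reachable x y ∨ (G.Reachable x a ∧ G.Reachable b y) ∨
      (G.Reachable x b ∧ G.Reachable a y) := by
  obtain ⟨p⟩ := h
  induction p with
  | nil => exact Or.inl .rfl
  | cons hxz _ ih =>
    rcases hxz with hxz | hxz
    · have := hxz.reachable
      rcases ih with h | ⟨h₁, h₂⟩ | ⟨h₁, h₂⟩
      exacts [Or.inl (this.trans h), Or.inr (Or.inl ⟨this.trans h₁, h₂⟩),
        Or.inr (Or.inr ⟨this.trans h₁, h₂⟩)]
    · obtain ⟨⟨rfl, rfl⟩ | ⟨rfl, rfl⟩, -⟩ := (edge_adj ..).mp hxz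
      · rcases ih with h | ⟨h₁, h₂⟩ | ⟨h₁, h₂⟩
        exacts [Or.inr (Or.inl ⟨.rfl, h⟩), Or.inr (Or.inl ⟨.rfl, h₂⟩), Or.inl h₂]
      · rcases ih with h | ⟨h₁, h₂⟩ | ⟨h₁, h₂⟩
        exacts [Or.inr (Or.inr ⟨.rfl, h⟩), Or.inl h₂, Or.inr (Or.inr ⟨.rfl, h₂⟩)]

end SimpleGraph

namespace TwoNCTAP

open SimpleGraph

variable {V : Type*} {H H' : SimpleGraph V} {u a b x : V}

theorem delVert_mono (h : H ≤ H') (u : V) : delVert H u ≤ delVert H' u :=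
  fun _ _ ⟨hxy, hx, hy⟩ => ⟨h hxy, hx, hy⟩

theorem delVert_sup_edge_le (H : SimpleGraph V) (u a b : V) :
    delVert (H ⊔ edge a b) u ≤ delVert H u ⊔ edge a b := by
  rintro x y ⟨hxy | hxy, hx, hy⟩
  exacts [Or.inl ⟨hxy, hx, hy⟩, Or.inr hxy]

theorem eq_of_reachable_delVert (h : (delVert H u).Reachable x u) : x = u := by
  obtain ⟨p⟩ := h.symm
  cases p with
  | nil => rfl
  | cons h _ => exact absurd rfl h.2.1

theorem compPartition_eq_image_supp (H : SimpleGraph V) (u : V) :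
    compPartition H u =
      ConnectedComponent.supp '' ((delVert H u).connectedComponentMk '' {v | v ≠ u}) := by
  ext S
  simp only [compPartition, Set.mem_ofPred_eq, Set.image_image]
  refine exists_congr fun v => and_congr_right fun _ => ?_
  rw [eq_comm]
  refine Eq.congr_left (Set.ext fun w => ?_)
  rw [ConnectedComponent.mem_supp_iff, ConnectedComponent.eq]
  exact ⟨Reachable.symm, Reachable.symm⟩

theorem ncard_compPartition (H : SimpleGraph V) (u : V) :
    (compPartition H u).ncard = ((delVert H u).connectedComponentMk '' {v | v ≠ u}).ncard := by
  rw [compPartition_eq_image_supp, Set.ncard_image_of_injective _ ConnectedComponent.supp_injective]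

theorem crosses_compPartition_iff :
    Crosses (compPartition H u) s(a, b) ↔
      a ≠ u ∧ b ≠ u ∧ (delVert H u).connectedComponentMk a ≠ (delVert H u).connectedComponentMk b := by
  set K := delVert H u
  have hne : ∀ {v x}, x ≠ u → K.connectedComponentMk v = K.connectedComponentMk x → v ≠ u :=
    fun hx hvx hv => hx (eq_of_reachable_delVert (hv ▸ ConnectedComponent.eq.mp hvx.symm))
  simp only [Crosses, compPartition_eq_image_supp, Set.image_image, Set.mem_image,
    Set.mem_ofPred_eq]
  constructor
  · rintro ⟨v, w, hvw, _, ⟨x, hx, rfl⟩, _, ⟨y, hy, rfl⟩, hxy, hv, hw⟩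
    have hxy : K.connectedComponentMk v ≠ K.connectedComponentMk w := by
      rw [hv, hw]; exact fun h => hxy (congrArg _ h)
    rcases Sym2.eq_iff.mp hvw with ⟨rfl, rfl⟩ | ⟨rfl, rfl⟩
    exacts [⟨hne hx hv, hne hy hw, hxy⟩, ⟨hne hy hw, hne hx hv, hxy.symm⟩]
  · rintro ⟨ha, hb, hab⟩
    exact ⟨a, b, rfl, _, ⟨a, ha, rfl⟩, _, ⟨b, hb, rfl⟩,
      fun h => hab (ConnectedComponent.supp_injective h), rfl, rfl⟩

theorem ncard_compPartition_of_le (h : H ≤ H') (u : V) :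
    (compPartition H' u).ncard =
      (ConnectedComponent.map (Hom.ofLE (delVert_mono h u)) ''
        ((delVert H u).connectedComponentMk '' {v | v ≠ u})).ncard := by
  rw [ncard_compPartition, Set.image_image]
  rfl

theorem ncard_compPartition_sup_edge_of_crosses [Finite V]
    (h : Crosses (compPartition H u) s(a, b)) :
    (compPartition (H ⊔ edge a b) u).ncard + 1 = (compPartition H u).ncard := by
  obtain ⟨ha, hb, hab⟩ := crosses_compPartition_iff.mp h
  rw [ncard_compPartition_of_le le_sup_left, ncard_compPartition]
  refine Set.ncard_image_add_one_of_injOn_sdiff_singleton ⟨a, ha, rfl⟩ ⟨b, hb, rfl⟩ hab ?_ ?_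
  · rw [ConnectedComponent.map_mk, ConnectedComponent.map_mk, ConnectedComponent.eq]
    have hab' : a ≠ b := by rintro rfl; exact hab rfl
    exact Adj.reachable ⟨Or.inr ((edge_adj ..).mpr ⟨Or.inl ⟨rfl, rfl⟩, hab'⟩), ha, hb⟩
  · rintro _ ⟨⟨x, -, rfl⟩, hxb⟩ _ ⟨⟨y, -, rfl⟩, hyb⟩ hxy
    rw [ConnectedComponent.map_mk, ConnectedComponent.map_mk, ConnectedComponent.eq] at hxy
    rw [Set.mem_singleton_iff, ConnectedComponent.eq] at hxb hyb
    rcases (hxy.mono (delVert_sup_edge_le H u a b)).of_sup_edge with hr | ⟨-, hr⟩ | ⟨hr, -⟩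
    exacts [ConnectedComponent.eq.mpr hr, absurd hr.symm hyb, absurd hr hxb]

theorem ncard_compPartition_sup_edge_of_not_crosses
    (h : ¬ Crosses (compPartition H u) s(a, b)) :
    (compPartition (H ⊔ edge a b) u).ncard = (compPartition H u).ncard := by
  set K := delVert H u
  have hab : a ≠ u → b ≠ u → K.Reachable a b := by
    simpa [crosses_compPartition_iff, ConnectedComponent.eq] using h
  have hne : ∀ {v w}, v ≠ u → K.Reachable v w → w ≠ u :=
    fun hv hvw hw => hv (eq_of_reachable_delVert (hw ▸ hvw))
  rw [ncard_compPartition_of_le le_sup_left, ncard_compPartition]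
  refine Set.InjOn.ncard_image ?_
  rintro _ ⟨x, hx, rfl⟩ _ ⟨y, hy, rfl⟩ hxy
  rw [ConnectedComponent.map_mk, ConnectedComponent.map_mk, ConnectedComponent.eq] at hxy
  rw [ConnectedComponent.eq]
  rcases (hxy.mono (delVert_sup_edge_le H u a b)).of_sup_edge with h | ⟨hxa, hby⟩ | ⟨hxb, hay⟩
  · exact h
  · exact hxa.trans ((hab (hne hx hxa) (hne hy hby.symm)).trans hby)
  · exact hxb.trans ((hab (hne hy hay.symm) (hne hx hxb)).symm.trans hay)

theorem ncard_compPartition_sup_fromEdgeSet_add [Finite V] (H : SimpleGraph V) (u : V)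
    (e : Sym2 V) :
    (compPartition (H ⊔ fromEdgeSet {e}) u).ncard +
        (if Crosses (compPartition H u) e then 1 else 0) = (compPartition H u).ncard := by
  induction e using Sym2.ind with | h a b => ?_
  split_ifs with h
  · exact ncard_compPartition_sup_edge_of_crosses h
  · exact ncard_compPartition_sup_edge_of_not_crosses h

theorem yOf_castSucc {k : ℕ} (w : Fin (k + 1) → ℝ) (j : Fin k) :
    yOf w j.castSucc = yOf (w ∘ Fin.castSucc) j := by
  simp only [yOf, Fin.val_castSucc]
  rfl

theorem sum_yOf {k : ℕ} (w : Fin (k + 1) → ℝ) : ∑ j, yOf w j = w (Fin.last k) := by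
  induction k with
  | zero => simp [yOf]
  | succ k ih =>
    rw [Fin.sum_univ_castSucc]
    simp only [yOf_castSucc, ih]
    simp [yOf, Fin.last]

theorem sum_natCast_sub_mul_yOf : ∀ {k : ℕ} (w : Fin k → ℝ),
    ∑ j, ((k : ℝ) - j) * yOf w j = ∑ j, w j
  | 0, _ => by simp
  | k + 1, w => by
    have ih := sum_natCast_sub_mul_yOf (w ∘ Fin.castSucc)
    calc ∑ j : Fin (k + 1), (((k + 1 : ℕ) : ℝ) - j) * yOf w j
        = ∑ j : Fin (k + 1), yOf w j + ∑ j : Fin (k + 1), ((k : ℝ) - j) * yOf w j := by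
          rw [← sum_add_distrib]
          refine sum_congr rfl fun j _ => ?_
          push_cast
          ring
      _ = w (Fin.last k) + ∑ j : Fin k, w j.castSucc := by
          rw [sum_yOf, Fin.sum_univ_castSucc]
          simp [yOf_castSucc, ih]
      _ = ∑ j, w j := by rw [Fin.sum_univ_castSucc, add_comm]

section Run

variable {m : ℕ} (T : SimpleGraph V) (ℓseq : Fin m → Sym2 V)

theorem curPtn_zero (u : V) : curPtn T ℓseq 0 u = compPartition T u := by
  simp [curPtn, withLinks]

theorem curPtn_succ (u : V) (i : Fin m) :
    curPtn T ℓseq (i + 1) u =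
      compPartition (withLinks T {e | ∃ j : Fin m, (j : ℕ) < i ∧ ℓseq j = e} ⊔
        fromEdgeSet {ℓseq i}) u := by
  rw [curPtn, withLinks, withLinks, sup_assoc, ← fromEdgeSet_union]
  have hlinks : {e | ∃ j : Fin m, (j : ℕ) < i + 1 ∧ ℓseq j = e} =
      {e | ∃ j : Fin m, (j : ℕ) < i ∧ ℓseq j = e} ∪ {ℓseq i} := by
    ext e
    simp only [Set.mem_union, Set.mem_singleton_iff, Set.mem_ofPred_eq, Nat.lt_succ_iff_lt_or_eq,
      or_and_right, exists_or, ← Fin.ext_iff, exists_eq_left', eq_comm]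
  rw [hlinks]

theorem ncard_curPtn_succ_add [Finite V] (u : V) (i : Fin m) :
    (curPtn T ℓseq (i + 1) u).ncard +
        (if Crosses (curPtn T ℓseq i u) (ℓseq i) then 1 else 0) = (curPtn T ℓseq i u).ncard := by
  rw [curPtn_succ]
  exact ncard_compPartition_sup_fromEdgeSet_add _ _ _

theorem ncard_curPtn_add_card_crossings [Finite V] (u : V) : ∀ i ≤ m,
    (curPtn T ℓseq i u).ncard + #{j : Fin m | (j : ℕ) < i ∧ Crosses (curPtn T ℓseq j u) (ℓseq j)}
      = (compPartition T u).ncard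
  | 0, _ => by simp [curPtn_zero]
  | i + 1, hi => by
    have hstep := ncard_curPtn_succ_add T ℓseq u ⟨i, hi⟩
    have hcount := Fin.card_filter_val_lt_succ_and
      (fun j : Fin m => Crosses (curPtn T ℓseq j u) (ℓseq j)) ⟨i, hi⟩
    have ih := ncard_curPtn_add_card_crossings u i (by omega)
    dsimp only at hstep hcount
    omega

theorem ncard_curPtn_add_of_strictMono [Finite V] (u : V) {k : ℕ} {σ : Fin k → Fin m}
    (hσ : StrictMono σ)
    (hcross : ∀ i : Fin m, Crosses (curPtn T ℓseq i u) (ℓseq i) ↔ ∃ j, σ j = i) (j : Fin k) :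
    (curPtn T ℓseq (σ j) u).ncard + j = (compPartition T u).ncard := by
  have hcount : #{i : Fin m | (i : ℕ) < σ j ∧ Crosses (curPtn T ℓseq i u) (ℓseq i)} = j := by
    rw [← Fin.card_Iio j, ← card_image_of_injective _ hσ.injective]
    congr 1
    ext i
    simp only [mem_filter, mem_univ, true_and, mem_image, mem_Iio, hcross, Fin.val_fin_lt]
    constructor
    · rintro ⟨hi, j', rfl⟩
      exact ⟨j', hσ.lt_iff_lt.mp hi, rfl⟩
    · rintro ⟨j', hj', rfl⟩
      exact ⟨hσ hj', j', rfl⟩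
  rw [← hcount]
  exact ncard_curPtn_add_card_crossings T ℓseq u _ (σ j).isLt.le

theorem sum_ncard_curPtn_sub_one_mul_yOf [Finite V] (u : V)
    {σ : Fin (nblocks T u - 1) → Fin m} (hσ : StrictMono σ)
    (hcross : ∀ i : Fin m, Crosses (curPtn T ℓseq i u) (ℓseq i) ↔ ∃ j, σ j = i)
    (w : Fin (nblocks T u - 1) → ℝ) :
    ∑ j, (((curPtn T ℓseq (σ j) u).ncard : ℝ) - 1) * yOf w j = ∑ j, w j := by
  rw [← sum_natCast_sub_mul_yOf w]
  refine sum_congr rfl fun j _ => ?_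
  have hcoeff : ((curPtn T ℓseq (σ j) u).ncard : ℝ) - 1 = ((nblocks T u - 1 : ℕ) : ℝ) - j := by
    have hj := j.isLt
    have hcount : ((curPtn T ℓseq (σ j) u).ncard : ℝ) + j = nblocks T u := by
      exact_mod_cast ncard_curPtn_add_of_strictMono T ℓseq u hσ hcross j
    rw [Nat.cast_sub (by omega), Nat.cast_one]
    linarith
  rw [hcoeff]

theorem sum_nonLeaf_sum_comp_eq_sum_ncard_incSet_mul [Fintype V] {k : V → ℕ}
    {σ : (u : V) → Fin (k u) → Fin m} (hσ : ∀ u, NonLeaf T u → Function.Injective (σ u))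
    (hcross : ∀ u, NonLeaf T u →
      ∀ i : Fin m, Crosses (curPtn T ℓseq i u) (ℓseq i) ↔ ∃ j, σ u j = i)
    (g : Fin m → ℝ) :
    ∑ u ∈ univ.filter (NonLeaf T), ∑ j, g (σ u j) =
      ∑ i : Fin m, ((incSet T ℓseq i (ℓseq i)).ncard : ℝ) * g i := by
  calc ∑ u ∈ univ.filter (NonLeaf T), ∑ j, g (σ u j)
      = ∑ u ∈ univ.filter (NonLeaf T),
          ∑ i ∈ univ.filter (fun i : Fin m => u ∈ incSet T ℓseq i (ℓseq i)), g i := by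
        refine sum_congr rfl fun u hu => ?_
        have hu := (mem_filter.mp hu).2
        rw [← sum_image fun j _ j' _ h => hσ u hu h]
        congr 1
        ext i
        simp [incSet, hu, hcross u hu]
    _ = ∑ i : Fin m, ∑ u ∈ univ.filter (fun u => u ∈ incSet T ℓseq i (ℓseq i)), g i :=
        sum_comm' fun u i => by
          simp only [mem_filter, mem_univ, true_and, and_true, and_iff_right_iff_imp]
          exact And.left
    _ = ∑ i : Fin m, ((incSet T ℓseq i (ℓseq i)).ncard : ℝ) * g i := by
        simp [Set.ncard_eq_toFinset_card']

end Run

variable [Fintype V]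

theorem dual_objective_equals_greedy_cost_general
    (G T : SimpleGraph V) (cost : Sym2 V → ℝ)
    (m : ℕ) (ℓseq : Fin m → Sym2 V) (hrun : IsGreedyRun G T cost m ℓseq)
    (sig : (u : V) → Fin (nblocks T u - 1) → Fin m)
    (hsig : ∀ u : V, NonLeaf T u → StrictMono (sig u) ∧
      ∀ i : Fin m, Crosses (curPtn T ℓseq (i : ℕ) u) (ℓseq i) ↔ ∃ j, sig u j = i)
    (w : (u : V) → Fin (nblocks T u - 1) → ℝ)
    (hw : ∀ (u : V) (j : Fin (nblocks T u - 1)),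
      w u j = cost (ℓseq (sig u j)) /
        ((incSet T ℓseq ((sig u j : Fin m) : ℕ) (ℓseq (sig u j))).ncard : ℝ)) :
    (∀ u : V, NonLeaf T u →
      ∑ j : Fin (nblocks T u - 1),
          (((curPtn T ℓseq ((sig u j : Fin m) : ℕ) u).ncard : ℝ) - 1) * yOf (w u) j
        = ∑ j : Fin (nblocks T u - 1), w u j) ∧
    ∑ u ∈ Finset.univ.filter (fun u : V => NonLeaf T u),
        ∑ j : Fin (nblocks T u - 1),
          (((curPtn T ℓseq ((sig u j : Fin m) : ℕ) u).ncard : ℝ) - 1) * yOf (w u) j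
      = ∑ i : Fin m, cost (ℓseq i) := by
  have hdual : ∀ u, NonLeaf T u → ∑ j : Fin (nblocks T u - 1),
      (((curPtn T ℓseq (sig u j) u).ncard : ℝ) - 1) * yOf (w u) j = ∑ j, w u j :=
    fun u hu => sum_ncard_curPtn_sub_one_mul_yOf T ℓseq u (hsig u hu).1 (hsig u hu).2 (w u)
  refine ⟨hdual, ?_⟩
  obtain ⟨-, -, hgreedy, -⟩ := hrun
  have hinc : ∀ i : Fin m, ((incSet T ℓseq i (ℓseq i)).ncard : ℝ) ≠ 0 := fun i => by
    exact_mod_cast ((Set.ncard_pos (Set.toFinite _)).mpr (hgreedy i).1).ne'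
  calc _ = ∑ u ∈ univ.filter (NonLeaf T), ∑ j, w u j :=
        sum_congr rfl fun u hu => hdual u (mem_filter.mp hu).2
    _ = ∑ i : Fin m, ((incSet T ℓseq i (ℓseq i)).ncard : ℝ) *
          (cost (ℓseq i) / (incSet T ℓseq i (ℓseq i)).ncard) := by
        simp only [hw]
        exact sum_nonLeaf_sum_comp_eq_sum_ncard_incSet_mul T ℓseq
          (fun u hu => (hsig u hu).1.injective) (fun u hu => (hsig u hu).2)
          (fun i => cost (ℓseq i) / (incSet T ℓseq i (ℓseq i)).ncard)
    _ = ∑ i : Fin m, cost (ℓseq i) := sum_congr rfl fun i _ => mul_div_cancel₀ _ (hinc i)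

/-- In any greedy run, the dual objective value of `y` equals the total
cost of the picked links: for each non-leaf node `u` of `T`,
`Σ_𝒫 (|𝒫|−1)·y(𝒫) = Σ_j wgt(𝒫̂^j_u)` (the sum over the hatted partitions of `u`, all other
partitions carrying `y = 0`), and summing over all non-leaf nodes gives
`Σ_i cost(ℓ_i)`. -/
theorem dual_objective_equals_greedy_cost
    (G T : SimpleGraph V) (hV : 3 ≤ Fintype.card V) (hTG : T ≤ G) (hT : T.IsTree)
    (cost : Sym2 V → ℝ) (hcost : ∀ e ∈ links G T, 0 ≤ cost e)
    (m : ℕ) (ℓseq : Fin m → Sym2 V) (hrun : IsGreedyRun G T cost m ℓseq)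
    (sig : (u : V) → Fin (nblocks T u - 1) → Fin m)
    (hsig : ∀ u : V, NonLeaf T u → StrictMono (sig u) ∧
      ∀ i : Fin m, Crosses (curPtn T ℓseq (i : ℕ) u) (ℓseq i) ↔ ∃ j, sig u j = i)
    (w : (u : V) → Fin (nblocks T u - 1) → ℝ)
    (hw : ∀ (u : V) (j : Fin (nblocks T u - 1)),
      w u j = cost (ℓseq (sig u j)) /
        ((incSet T ℓseq ((sig u j : Fin m) : ℕ) (ℓseq (sig u j))).ncard : ℝ)) :
    (∀ u : V, NonLeaf T u →
      ∑ j : Fin (nblocks T u - 1),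
          (((curPtn T ℓseq ((sig u j : Fin m) : ℕ) u).ncard : ℝ) - 1) * yOf (w u) j
        = ∑ j : Fin (nblocks T u - 1), w u j) ∧
    ∑ u ∈ Finset.univ.filter (fun u : V => NonLeaf T u),
        ∑ j : Fin (nblocks T u - 1),
          (((curPtn T ℓseq ((sig u j : Fin m) : ℕ) u).ncard : ℝ) - 1) * yOf (w u) j
      = ∑ i : Fin m, cost (ℓseq i) :=
  dual_objective_equals_greedy_cost_general G T cost m ℓseq hrun sig hsig w hw

end TwoNCTAP
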